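/- arXiv:1605.07527 — 7 statements merged into one kernel-verified Lean document; each statement's English description precedes it below -/
import Mathlib

section
/- For every k > 1 and every odd c > 1, the equation x + y = c * z^k is not partition regular on the positive integers: there exists a finite coloring of the positive integers with no monochromatic solution (x, y, z). -/
noncomputable def gval (k n : ℕ) : ℝ :=
  2 * (Real.log (Real.log n / Real.log 2) / Real.log k)

noncomputable def gfun (k n : ℕ) : ℕ := (⌊gval k n⌋).toNat % 4

noncomputable def fcol (c k n : ℕ) : ℕ :=
  if n < c ^ 4 then n else c ^ 4 + gfun k n

lemma gfun_ne (c k z m : ℕ) (hk : 2 ≤ k) (hc : 3 ≤ c)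
    (hz : c ^ 4 ≤ z) (h1 : z ^ k ≤ m) (h2 : m < c * z ^ k) :
    gfun k m ≠ gfun k z := by
  have hc4 : (2 : ℕ) ≤ c ^ 4 := by
    have : 3 ^ 4 ≤ c ^ 4 := Nat.pow_le_pow_left hc 4
    omega
  have hz2 : (2 : ℕ) ≤ z := le_trans hc4 hz
  have hm2 : (2 : ℕ) ≤ m := le_trans (le_trans hz2 (Nat.le_self_pow (by omega) z)) h1
  have hzR : (2 : ℝ) ≤ (z : ℝ) := by exact_mod_cast hz2
  have hmR : (2 : ℝ) ≤ (m : ℝ) := by exact_mod_cast hm2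
  have hlog2 : (0 : ℝ) < Real.log 2 := Real.log_pos (by norm_num)
  have hLk : (0 : ℝ) < Real.log k := Real.log_pos (by exact_mod_cast hk)
  have hkR : (2 : ℝ) ≤ (k : ℝ) := by exact_mod_cast hk
  set X : ℝ := Real.log z / Real.log 2 with hXdef
  set Y : ℝ := Real.log m / Real.log 2 with hYdef
  have hX1 : (1 : ℝ) ≤ X := by
    rw [hXdef, le_div_iff₀ hlog2]
    simpa using Real.log_le_log (by norm_num) hzR
  have hX0 : (0 : ℝ) < X := by linarith
  -- k * X ≤ Y  from z^k ≤ m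
  have hkX : (k : ℝ) * X ≤ Y := by
    have h : (k : ℝ) * Real.log z ≤ Real.log m := by
      have h' : Real.log ((z : ℝ) ^ k) ≤ Real.log m :=
        Real.log_le_log (by positivity) (by exact_mod_cast h1)
      rwa [Real.log_pow] at h'
    rw [hXdef, hYdef, mul_div_assoc']
    gcongr
  have hY0 : (0 : ℝ) < Y := lt_of_lt_of_le (by nlinarith) hkX
  -- 4 * Y ≤ (4k+1) * X  from m^4 ≤ z^(4k+1)
  have hnat : m ^ 4 ≤ z ^ (4 * k + 1) := by
    have h4 : m ^ 4 < (c * z ^ k) ^ 4 := Nat.pow_lt_pow_left h2 (by norm_num)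
    have heq : (c * z ^ k) ^ 4 = c ^ 4 * z ^ (4 * k) := by
      rw [mul_pow, ← pow_mul, mul_comm k 4]
    have hle : c ^ 4 * z ^ (4 * k) ≤ z ^ (4 * k + 1) := by
      calc c ^ 4 * z ^ (4 * k) ≤ z * z ^ (4 * k) := Nat.mul_le_mul_right _ hz
        _ = z ^ (4 * k + 1) := by ring
    omega
  have h4Y : 4 * Y ≤ (4 * (k : ℝ) + 1) * X := by
    have h : (4 : ℝ) * Real.log m ≤ (4 * (k : ℝ) + 1) * Real.log z := by
      have h' : Real.log ((m : ℝ) ^ 4) ≤ Real.log ((z : ℝ) ^ (4 * k + 1)) :=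
        Real.log_le_log (by positivity) (by exact_mod_cast hnat)
      rw [Real.log_pow, Real.log_pow] at h'
      push_cast at h'
      linarith
    rw [hXdef, hYdef, mul_div_assoc', mul_div_assoc']
    gcongr
  -- two key bounds on the second-level logs
  have hlogX0 : (0 : ℝ) ≤ Real.log X := Real.log_nonneg hX1
  have key1 : Real.log X + Real.log k ≤ Real.log Y := by
    have h : Real.log ((k : ℝ) * X) ≤ Real.log Y :=
      Real.log_le_log (by positivity) hkX
    rwa [Real.log_mul (by positivity) (ne_of_gt hX0), add_comm] at h
  have key2 : 2 * Real.log Y ≤ 3 * Real.log k + 2 * Real.log X := by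
    have hsq : Y ^ 2 ≤ (k : ℝ) ^ 3 * X ^ 2 := by
      have hk3 : ((4 * (k : ℝ) + 1)) ^ 2 ≤ 16 * (k : ℝ) ^ 3 := by nlinarith
      nlinarith [sq_nonneg Y, sq_nonneg X, mul_pos hX0 hY0]
    have h : Real.log (Y ^ 2) ≤ Real.log ((k : ℝ) ^ 3 * X ^ 2) :=
      Real.log_le_log (by positivity) hsq
    rw [Real.log_pow, Real.log_mul (by positivity) (by positivity),
      Real.log_pow, Real.log_pow] at h
    push_cast at h
    linarith
  -- now the floor values
  set A : ℝ := gval k z with hAdef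
  set B : ℝ := gval k m with hBdef
  have hAval : A = 2 * (Real.log X / Real.log k) := by rw [hAdef]; rfl
  have hBval : B = 2 * (Real.log Y / Real.log k) := by rw [hBdef]; rfl
  have hA0 : 0 ≤ A := by rw [hAval]; positivity
  have hAB1 : A + 2 ≤ B := by
    have e : B - (A + 2)
        = (2 * Real.log Y - 2 * Real.log X - 2 * Real.log k) / Real.log k := by
      rw [hAval, hBval]; field_simp; try ring
    have h0 : 0 ≤ B - (A + 2) := by
      rw [e]; apply div_nonneg _ (le_of_lt hLk); linarith
    linarith
  have hAB2 : B ≤ A + 3 := by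
    have e : (A + 3) - B
        = (2 * Real.log X + 3 * Real.log k - 2 * Real.log Y) / Real.log k := by
      rw [hAval, hBval]; field_simp; try ring
    have h0 : 0 ≤ (A + 3) - B := by
      rw [e]; apply div_nonneg _ (le_of_lt hLk); linarith
    linarith
  have f1 : ⌊A⌋ + 2 ≤ ⌊B⌋ := by
    have : ⌊A + (2 : ℤ)⌋ ≤ ⌊B⌋ := Int.floor_le_floor (by push_cast; linarith)
    rwa [Int.floor_add_intCast] at this
  have f2 : ⌊B⌋ ≤ ⌊A⌋ + 3 := by
    have : ⌊B⌋ ≤ ⌊A + (3 : ℤ)⌋ := Int.floor_le_floor (by push_cast; linarith)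
    rwa [Int.floor_add_intCast] at this
  have h0 : 0 ≤ ⌊A⌋ := Int.floor_nonneg.mpr hA0
  unfold gfun
  rw [← hAdef, ← hBdef]
  omega

theorem x_add_y_eq_c_zk_not_PR (c k : ℕ) (hk : 1 < k) (hc : 1 < c) (hcodd : Odd c) :
    ∃ (r : ℕ) (χ : ℕ → Fin r),
      ¬ ∃ x y z : ℕ, 0 < x ∧ 0 < y ∧ 0 < z ∧
        χ x = χ y ∧ χ y = χ z ∧ x + y = c * z ^ k := by
  have hc3 : 3 ≤ c := by obtain ⟨j, hj⟩ := hcodd; omega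
  set n₀ := c ^ 4 with hn₀
  have hflt : ∀ n, fcol c k n < n₀ + 4 := by
    intro n
    unfold fcol
    split
    · omega
    · have : gfun k n < 4 := Nat.mod_lt _ (by norm_num)
      omega
  refine ⟨n₀ + 4, fun n => ⟨fcol c k n, hflt n⟩, ?_⟩
  rintro ⟨x, y, z, hx, hy, hz, hxy, hyz, heq⟩
  have hfxy : fcol c k x = fcol c k y := congrArg Fin.val hxy
  have hfyz : fcol c k y = fcol c k z := congrArg Fin.val hyz
  set m := max x y with hm
  have hmx : x ≤ m := le_max_left _ _
  have hmy : y ≤ m := le_max_right _ _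
  have hmor : m = x ∨ m = y := max_choice x y
  have hfm : fcol c k m = fcol c k z := by
    rcases hmor with h | h <;> rw [h]
    · rw [hfxy]; exact hfyz
    · exact hfyz
  have h2m : c * z ^ k ≤ 2 * m := by omega
  have hmlt : m < c * z ^ k := by omega
  have hzk : z ≤ z ^ k := Nat.le_self_pow (by omega) z
  have h3zk : 3 * z ^ k ≤ c * z ^ k := Nat.mul_le_mul_right _ hc3
  by_cases hcase : z < n₀
  · have hmsmall : m < n₀ := by
      by_contra hmn
      push_neg at hmn
      rw [fcol, fcol, if_neg (by omega), if_pos hcase] at hfm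
      omega
    rw [fcol, fcol, if_pos hmsmall, if_pos hcase] at hfm
    -- m = z, so c * z^k ≤ 2z, contradiction with 3 z^k ≥ 3z > 2z
    have : 3 * z ≤ 3 * z ^ k := by omega
    omega
  · push_neg at hcase
    have hm1 : z ^ k ≤ m := by omega
    have hmn₀ : n₀ ≤ m := le_trans (le_trans hcase hzk) hm1
    have hne := gfun_ne c k z m (by omega) hc3 hcase hm1 hmlt
    rw [fcol, fcol, if_neg (by omega), if_neg (by omega)] at hfm
    omega
end

section
/- For every n > 1 and every odd c > 1, the equation x^n + y^n = c * z is not partition regular on the positive integers except possibly for constant solutions: there exists a finite coloring of the positive integers such that any monochromatic solution (x, y, z) must satisfy x = y = z. -/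
/-- auxiliary valuation coloring -/
private def psiAux (n k : ℕ) : ℕ := if k = 0 then 3 else Nat.log n k % 3

private lemma psiAux_lt (n k : ℕ) : psiAux n k < 4 := by
  unfold psiAux; split <;> omega

private lemma fact2 (a u : ℕ) (hu : Odd u) : (2 ^ a * u).factorization 2 = a := by
  have hu0 : u ≠ 0 := by rintro rfl; simp [Nat.odd_iff] at hu
  have h2 : ¬ (2 ∣ u) := by
    have := Nat.odd_iff.mp hu
    omega
  rw [Nat.factorization_mul (pow_ne_zero _ two_ne_zero) hu0]
  simp [Nat.Prime.factorization_pow Nat.prime_two,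
    Nat.factorization_eq_zero_of_not_dvd h2]

private lemma pow2_mul_odd_inj {a b u w : ℕ} (hu : Odd u) (hw : Odd w)
    (h : 2 ^ a * u = 2 ^ b * w) : a = b ∧ u = w := by
  have hab : a = b := by
    have := congrArg (fun t => t.factorization 2) h
    simpa [fact2 a u hu, fact2 b w hw] using this
  subst hab
  refine ⟨rfl, ?_⟩
  exact Nat.eq_of_mul_eq_mul_left (pow_pos two_pos a) h

private lemma log_nmul {n a : ℕ} (hn : 1 < n) (ha : a ≠ 0) :
    Nat.log n (n * a) = Nat.log n a + 1 := by
  rw [mul_comm]; exact Nat.log_mul_base hn ha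

private lemma log_nmul1 {n a : ℕ} (hn : 1 < n) (ha : a ≠ 0) :
    Nat.log n (n * a + 1) = Nat.log n a + 1 := by
  set t := Nat.log n a with ht
  have h1 : n ^ t ≤ a := Nat.pow_log_le_self n ha
  have h2 : a < n ^ (t + 1) := Nat.lt_pow_succ_log_self hn a
  refine Nat.log_eq_of_pow_le_of_lt_pow ?_ ?_
  · calc n ^ (t + 1) = n * n ^ t := by ring
    _ ≤ n * a := Nat.mul_le_mul_left n h1
    _ ≤ n * a + 1 := Nat.le_succ _
  · calc n * a + 1 < n * (a + 1) := by nlinarith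
    _ ≤ n * n ^ (t + 1) := Nat.mul_le_mul_left n h2
    _ = n ^ (t + 1 + 1) := by ring

private lemma psi_ne_nmul1 {n : ℕ} (hn : 1 < n) (a : ℕ) :
    psiAux n a ≠ psiAux n (n * a + 1) := by
  rcases eq_or_ne a 0 with rfl | ha
  · simp [psiAux]
  · have h1 : n * a + 1 ≠ 0 := by positivity
    unfold psiAux
    rw [if_neg ha, if_neg h1, log_nmul1 hn ha]
    omega

private lemma psi_ne_nmul {n : ℕ} (hn : 1 < n) {a : ℕ} (ha : a ≠ 0) :
    psiAux n a ≠ psiAux n (n * a) := by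
  have h1 : n * a ≠ 0 := by positivity
  unfold psiAux
  rw [if_neg ha, if_neg h1, log_nmul hn ha]
  omega

private lemma psi_ne_zero {n : ℕ} (b : ℕ) (hb : b ≠ 0) :
    psiAux n b ≠ psiAux n 0 := by
  unfold psiAux
  rw [if_neg hb, if_pos rfl]
  omega

private lemma two_mul_odd_of_mod4 (n U W : ℕ) (hU : Odd U) (hW : Odd W)
    (h4 : U % 4 = W % 4) : ∃ T, Odd T ∧ U ^ n + W ^ n = 2 * T := by
  have h : U ≡ W [MOD 4] := h4
  have hpow : U ^ n % 4 = W ^ n % 4 := h.pow n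
  have h2 : U ^ n % 2 = 1 := Nat.odd_iff.mp hU.pow
  have h3 : W ^ n % 2 = 1 := Nat.odd_iff.mp hW.pow
  refine ⟨(U ^ n + W ^ n) / 2, ?_, ?_⟩
  · rw [Nat.odd_iff]; omega
  · omega

private lemma main_case (n c : ℕ) (hn : 1 < n) (hcodd : Odd c)
    (A D k U W S : ℕ) (hU : Odd U) (hW : Odd W) (hS : Odd S)
    (heq : (2 ^ A * U) ^ n + (2 ^ (A + k) * W) ^ n = c * (2 ^ D * S))
    (hUW : U % 4 = W % 4)
    (hAB : psiAux n A = psiAux n (A + k)) (hBD : psiAux n (A + k) = psiAux n D) :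
    False := by
  have hcS : Odd (c * S) := hcodd.mul hS
  have hRHS : c * (2 ^ D * S) = 2 ^ D * (c * S) := by ring
  rcases eq_or_ne k 0 with rfl | hk
  · -- equal 2-adic valuations
    obtain ⟨T, hT, hTeq⟩ := two_mul_odd_of_mod4 n U W hU hW hUW
    have hLHS : (2 ^ A * U) ^ n + (2 ^ (A + 0) * W) ^ n = 2 ^ (A * n + 1) * T := by
      have : (2 ^ A * U) ^ n + (2 ^ (A + 0) * W) ^ n
          = 2 ^ (A * n) * (U ^ n + W ^ n) := by ring
      rw [this, hTeq]; ring
    rw [hLHS, hRHS] at heq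
    obtain ⟨hval, -⟩ := pow2_mul_odd_inj hT hcS heq
    rw [add_zero] at hBD
    have : psiAux n A = psiAux n (n * A + 1) := by
      rw [hBD, ← hval, Nat.mul_comm A n]
    exact psi_ne_nmul1 hn A this
  · -- distinct 2-adic valuations
    have hpar : Odd (U ^ n + 2 ^ (k * n) * W ^ n) := by
      refine hU.pow.add_even ?_
      have : (2 : ℕ) ∣ 2 ^ (k * n) * W ^ n :=
        dvd_mul_of_dvd_left (dvd_pow_self 2 (by positivity)) _
      exact (even_iff_two_dvd).mpr this
    have hLHS : (2 ^ A * U) ^ n + (2 ^ (A + k) * W) ^ n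
        = 2 ^ (A * n) * (U ^ n + 2 ^ (k * n) * W ^ n) := by ring
    rw [hLHS, hRHS] at heq
    obtain ⟨hval, -⟩ := pow2_mul_odd_inj hpar hcS heq
    rcases eq_or_ne A 0 with rfl | hA
    · exact psi_ne_zero (0 + k) (by omega) hAB.symm
    · have : psiAux n A = psiAux n (n * A) := by
        rw [hAB.trans hBD, ← hval, Nat.mul_comm A n]
      exact psi_ne_nmul hn hA this

private lemma decomp {x : ℕ} (hx : 0 < x) :
    ∃ A U, Odd U ∧ x = 2 ^ A * U := by
  obtain ⟨A, U, hU, hx⟩ := Nat.exists_eq_pow_mul_and_not_dvd hx.ne' 2 (by norm_num)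
  exact ⟨A, U, Nat.odd_iff.mpr (by omega), hx⟩

theorem xn_add_yn_eq_cz_not_PR (n c : ℕ) (hn : 1 < n) (hc : 1 < c) (hcodd : Odd c) :
    ∃ (r : ℕ) (χ : ℕ → Fin r),
      ∀ x y z : ℕ, 0 < x → 0 < y → 0 < z →
        χ x = χ y → χ y = χ z → x ^ n + y ^ n = c * z → x = y ∧ y = z := by
  refine ⟨16, fun x => ⟨4 * psiAux n (x.factorization 2) + (x / 2 ^ (x.factorization 2)) % 4,
      by have := psiAux_lt n (x.factorization 2); omega⟩, ?_⟩
  intro x y z hx hy hz hxy hyz heq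
  exfalso
  obtain ⟨A, U, hU, hxd⟩ := decomp hx
  obtain ⟨B, W, hW, hyd⟩ := decomp hy
  obtain ⟨D, S, hS, hzd⟩ := decomp hz
  have hUplus : U ≠ 0 := by rintro rfl; simp [Nat.odd_iff] at hU
  have hWplus : W ≠ 0 := by rintro rfl; simp [Nat.odd_iff] at hW
  have hSplus : S ≠ 0 := by rintro rfl; simp [Nat.odd_iff] at hS
  have hfx : x.factorization 2 = A := by rw [hxd]; exact fact2 A U hU
  have hfy : y.factorization 2 = B := by rw [hyd]; exact fact2 B W hW
  have hfz : z.factorization 2 = D := by rw [hzd]; exact fact2 D S hS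
  have hdx : x / 2 ^ A = U := by
    rw [hxd]; exact Nat.mul_div_cancel_left U (pow_pos two_pos A)
  have hdy : y / 2 ^ B = W := by
    rw [hyd]; exact Nat.mul_div_cancel_left W (pow_pos two_pos B)
  have hdz : z / 2 ^ D = S := by
    rw [hzd]; exact Nat.mul_div_cancel_left S (pow_pos two_pos D)
  have hxy' : 4 * psiAux n A + U % 4 = 4 * psiAux n B + W % 4 := by
    have := congrArg Fin.val hxy
    simpa [hfx, hfy, hdx, hdy] using this
  have hyz' : 4 * psiAux n B + W % 4 = 4 * psiAux n D + S % 4 := by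
    have := congrArg Fin.val hyz
    simpa [hfy, hfz, hdy, hdz] using this
  have hltA := psiAux_lt n A
  have hltB := psiAux_lt n B
  have hltD := psiAux_lt n D
  have hU4 : U % 4 = W % 4 := by omega
  have hAB : psiAux n A = psiAux n B := by omega
  have hBD : psiAux n B = psiAux n D := by omega
  rw [hxd, hyd, hzd] at heq
  rcases le_total A B with hle | hle
  · obtain ⟨k, rfl⟩ := Nat.exists_eq_add_of_le hle
    exact main_case n c hn hcodd A D k U W S hU hW hS heq hU4 hAB hBD
  · obtain ⟨k, rfl⟩ := Nat.exists_eq_add_of_le hle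
    have heq' : (2 ^ B * W) ^ n + (2 ^ (B + k) * U) ^ n = c * (2 ^ D * S) := by
      rw [← heq]; ring
    exact main_case n c hn hcodd B D k W U S hW hU hS heq' hU4.symm
      (hAB.symm ▸ rfl) (hAB ▸ hBD)
end

section
/- Let n, m, k be positive integers with k ≠ n and k ≠ m. If (n, m, k) is not of the form (n, n, n+1), then the equation x^n + y^m = z^k is not partition regular on the positive integers; if (n, m, k) = (n, n, n+1), then the only possible monochromatic solution under a suitable coloring is the constant solution x = y = z = 2. Concretely: there exists a finite coloring of the positive integers such that every monochromatic solution (x, y, z) of x^n + y^m = z^k satisfies x = y = z = 2 (which forces n = m and k = n + 1). -/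
/-- Positive naturals with different values have different logs. -/
private lemma log_ne_of_ne {a b : ℕ} (ha : 0 < a) (hb : 0 < b) (hne : a ≠ b) :
    Real.log a ≠ Real.log b := by
  intro h
  apply hne
  have ha' : (0:ℝ) < a := by exact_mod_cast ha
  have hb' : (0:ℝ) < b := by exact_mod_cast hb
  have : (a:ℝ) = b := by rw [← Real.exp_log ha', h, Real.exp_log hb']
  exact_mod_cast this

/-- Core Archimedean lemma: if `x^n < z^k ≤ 2 x^n` with `x` large and `x, z` get the same
doubly-logarithmic colors, we get a contradiction. -/
private lemma core (n k : ℕ) (hn : 0 < n) (hk : 0 < k)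
    (hlog : Real.log n ≠ Real.log k)
    (d : ℝ) (hdabs : d = |Real.log n - Real.log k|)
    (δ : ℝ) (hδpos : 0 < δ) (hδle : δ ≤ d)
    (X₀ : ℕ) (hX : 8 * Real.log 2 / δ ≤ Real.log X₀)
    (x z : ℕ) (hxX : X₀ < x) (hz2 : 2 ≤ z)
    (hlow : ((x:ℝ))^n < (z:ℝ)^k) (hhigh : ((z:ℝ))^k ≤ 2 * (x:ℝ)^n)
    (hpar : (2:ℤ) ∣ (⌊Real.log (Real.log z) / d⌋ - ⌊Real.log (Real.log x) / d⌋))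
    (hwin : ⌊4 * Int.fract (Real.log (Real.log x) / d)⌋
          = ⌊4 * Int.fract (Real.log (Real.log z) / d)⌋) :
    False := by
  have hSne : Real.log n - Real.log k ≠ 0 := sub_ne_zero.mpr hlog
  have hd : 0 < d := hdabs ▸ abs_pos.mpr hSne
  have h2R : (0:ℝ) < Real.log 2 := Real.log_pos (by norm_num)
  have hX0pos : 0 < Real.log X₀ := lt_of_lt_of_le (by positivity) hX
  have hX₀2 : 2 ≤ X₀ := by
    by_contra hc
    push_neg at hc
    interval_cases X₀ <;> simp_all
  have hx1R : (1:ℝ) < (x:ℝ) := by exact_mod_cast (by omega : 1 < x)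
  have hz1R : (1:ℝ) < (z:ℝ) := by exact_mod_cast (by omega : 1 < z)
  set Lx := Real.log x with hLxdef
  set Lz := Real.log z with hLzdef
  have hLx : 0 < Lx := Real.log_pos hx1R
  have hLz : 0 < Lz := Real.log_pos hz1R
  have hLxX : Real.log X₀ ≤ Lx := by
    apply Real.log_le_log (by positivity)
    exact_mod_cast Nat.le_of_lt hxX
  have hθ1 : (n:ℝ) * Lx < k * Lz := by
    have h := Real.log_lt_log (by positivity) hlow
    rwa [Real.log_pow, Real.log_pow] at h
  have hθ2 : (k:ℝ) * Lz ≤ Real.log 2 + n * Lx := by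
    have h := Real.log_le_log (by positivity) hhigh
    rwa [Real.log_pow, Real.log_mul (by norm_num) (by positivity), Real.log_pow] at h
  have hnR : (1:ℝ) ≤ n := by exact_mod_cast hn
  have hkR : (0:ℝ) < k := by exact_mod_cast hk
  have hnLx : (0:ℝ) < (n:ℝ) * Lx := mul_pos (by linarith) hLx
  set u : ℝ := ((k:ℝ) * Lz - n * Lx) / ((n:ℝ) * Lx) with hu
  have hu0 : 0 < u := div_pos (by linarith) hnLx
  have huB : u ≤ d / 8 := by
    have h1 : u ≤ Real.log 2 / Lx := by
      rw [hu]
      apply div_le_div₀ (le_of_lt h2R) (by linarith) hLx (by nlinarith)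
    have h2 : Real.log 2 / Lx ≤ δ / 8 := by
      rw [div_le_div_iff₀ hLx (by norm_num : (0:ℝ) < 8)]
      have h3 : δ * (8 * Real.log 2 / δ) ≤ δ * Lx :=
        mul_le_mul_of_nonneg_left (le_trans hX hLxX) (le_of_lt hδpos)
      have h4 : δ * (8 * Real.log 2 / δ) = 8 * Real.log 2 := by
        field_simp
      rw [h4] at h3
      linarith
    linarith
  have hmul : ((n:ℝ) * Lx) * u = (k:ℝ) * Lz - (n:ℝ) * Lx := by
    rw [hu]; field_simp
  have hkLz : (k:ℝ) * Lz = ((n:ℝ) * Lx) * (1 + u) := by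
    rw [mul_add, mul_one, hmul]; ring
  have hloglog : Real.log Lz - Real.log Lx
      = (Real.log n - Real.log k) + Real.log (1 + u) := by
    have e1 : Real.log ((k:ℝ) * Lz) = Real.log k + Real.log Lz :=
      Real.log_mul (ne_of_gt hkR) (ne_of_gt hLz)
    have e2 : Real.log (((n:ℝ) * Lx) * (1 + u))
        = Real.log n + Real.log Lx + Real.log (1+u) := by
      rw [Real.log_mul (ne_of_gt hnLx) (by linarith),
        Real.log_mul (by positivity : (n:ℝ) ≠ 0) (ne_of_gt hLx)]
    have e3 : Real.log k + Real.log Lz = Real.log n + Real.log Lx + Real.log (1+u) := by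
      rw [← e1, hkLz, e2]
    linarith
  set η := Real.log (1 + u) / d with hηdef
  have hη0 : 0 ≤ η := div_nonneg (Real.log_nonneg (by linarith)) hd.le
  have hη8 : η ≤ 1/8 := by
    have hlu : Real.log (1+u) ≤ u := by
      have := Real.log_le_sub_one_of_pos (show (0:ℝ) < 1 + u by linarith)
      linarith
    rw [hηdef, div_le_iff₀ hd]
    linarith
  have hPdiff : Real.log Lz / d - Real.log Lx / d
      = (Real.log n - Real.log k) / d + η := by
    rw [hηdef, ← sub_div, hloglog, add_div]
  have hScases : (Real.log n - Real.log k) / d = 1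
      ∨ (Real.log n - Real.log k) / d = -1 := by
    rcases hSne.lt_or_gt with h | h
    · right; rw [hdabs, abs_of_neg h, div_neg, div_self hSne]
    · left; rw [hdabs, abs_of_pos h, div_self hSne]
  -- fract window
  set fx := Int.fract (Real.log Lx / d) with hfx
  set fz := Int.fract (Real.log Lz / d) with hfz
  have hw1 : (⌊4*fx⌋ : ℝ) ≤ 4*fx := Int.floor_le _
  have hw2 : 4*fx < ⌊4*fx⌋ + 1 := Int.lt_floor_add_one _
  have hw3 : (⌊4*fz⌋ : ℝ) ≤ 4*fz := Int.floor_le _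
  have hw4 : 4*fz < ⌊4*fz⌋ + 1 := Int.lt_floor_add_one _
  rw [hwin] at hw1 hw2
  have hfr1 : fz - fx < 1/4 := by linarith
  have hfr2 : fx - fz < 1/4 := by linarith
  have hDz : (⌊Real.log Lz / d⌋ : ℝ) = Real.log Lz / d - fz := by
    rw [hfz]; exact (Int.self_sub_fract _).symm
  have hDx : (⌊Real.log Lx / d⌋ : ℝ) = Real.log Lx / d - fx := by
    rw [hfx]; exact (Int.self_sub_fract _).symm
  rcases hScases with h | h
  · have h1 : (0:ℝ) < ((⌊Real.log Lz / d⌋ - ⌊Real.log Lx / d⌋ : ℤ) : ℝ) := by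
      push_cast
      rw [hDz, hDx]
      have := hPdiff
      rw [h] at this
      linarith
    have h2 : ((⌊Real.log Lz / d⌋ - ⌊Real.log Lx / d⌋ : ℤ) : ℝ) < 2 := by
      push_cast
      rw [hDz, hDx]
      have := hPdiff
      rw [h] at this
      linarith
    have h1' : (0:ℤ) < ⌊Real.log Lz / d⌋ - ⌊Real.log Lx / d⌋ := by exact_mod_cast h1
    have h2' : (⌊Real.log Lz / d⌋ - ⌊Real.log Lx / d⌋ : ℤ) < 2 := by exact_mod_cast h2
    omega
  · have h1 : ((-2:ℤ) : ℝ) < ((⌊Real.log Lz / d⌋ - ⌊Real.log Lx / d⌋ : ℤ) : ℝ) := by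
      push_cast
      rw [hDz, hDx]
      have := hPdiff
      rw [h] at this
      linarith
    have h2 : ((⌊Real.log Lz / d⌋ - ⌊Real.log Lx / d⌋ : ℤ) : ℝ) < 0 := by
      push_cast
      rw [hDz, hDx]
      have := hPdiff
      rw [h] at this
      linarith
    have h1' : (-2:ℤ) < ⌊Real.log Lz / d⌋ - ⌊Real.log Lx / d⌋ := by exact_mod_cast h1
    have h2' : (⌊Real.log Lz / d⌋ - ⌊Real.log Lx / d⌋ : ℤ) < 0 := by exact_mod_cast h2
    omega


private lemma par_dvd {a b : ℝ} (h : ((⌊a⌋ : ℤ) : ZMod 2) = ((⌊b⌋ : ℤ) : ZMod 2)) :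
    (2:ℤ) ∣ (⌊b⌋ - ⌊a⌋) := by
  have := (ZMod.intCast_eq_intCast_iff_dvd_sub _ _ 2).mp h
  exact_mod_cast this

private lemma win_eq {a b : ℝ}
    (h : ((⌊4 * Int.fract a⌋ : ℤ) : ZMod 4) = ((⌊4 * Int.fract b⌋ : ℤ) : ZMod 4)) :
    ⌊4 * Int.fract a⌋ = ⌊4 * Int.fract b⌋ := by
  have h4 := (ZMod.intCast_eq_intCast_iff_dvd_sub _ _ 4).mp h
  have h5 : (4:ℤ) ∣ ⌊4 * Int.fract b⌋ - ⌊4 * Int.fract a⌋ := by exact_mod_cast h4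
  have hb1 : (0:ℤ) ≤ ⌊4 * Int.fract a⌋ :=
    Int.floor_nonneg.mpr (mul_nonneg (by norm_num) (Int.fract_nonneg _))
  have hb2 : (0:ℤ) ≤ ⌊4 * Int.fract b⌋ :=
    Int.floor_nonneg.mpr (mul_nonneg (by norm_num) (Int.fract_nonneg _))
  have hb3 : ⌊4 * Int.fract a⌋ < 4 :=
    Int.floor_lt.mpr (by push_cast; nlinarith [Int.fract_lt_one a])
  have hb4 : ⌊4 * Int.fract b⌋ < 4 :=
    Int.floor_lt.mpr (by push_cast; nlinarith [Int.fract_lt_one b])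
  omega

/-- If `x ≥ 1` and `x^n + x^m = x^k` then `x = 2`. -/
private lemma endg (n m k x : ℕ) (hn : 0 < n) (hm : 0 < m) (hx : 0 < x)
    (h : x ^ n + x ^ m = x ^ k) : x = 2 := by
  rcases Nat.lt_or_ge x 2 with h1 | h2
  · interval_cases x
    · simp at h
  · have hM : x ^ max n m < x ^ k := by
      have hxn : 1 ≤ x ^ n := Nat.one_le_pow _ _ hx
      have hxm : 1 ≤ x ^ m := Nat.one_le_pow _ _ hx
      rcases max_cases n m with ⟨he, _⟩ | ⟨he, _⟩ <;> rw [he] <;> omega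
    have hMk : max n m < k := (Nat.pow_lt_pow_iff_right h2).mp hM
    have h3 : x * x ^ max n m ≤ x ^ k := by
      rw [← pow_succ']
      exact Nat.pow_le_pow_right (by omega) (by omega)
    have h4 : x ^ k ≤ 2 * x ^ max n m := by
      have hn' : x ^ n ≤ x ^ max n m := Nat.pow_le_pow_right (by omega) (le_max_left _ _)
      have hm' : x ^ m ≤ x ^ max n m := Nat.pow_le_pow_right (by omega) (le_max_right _ _)
      omega
    have h5 : 0 < x ^ max n m := Nat.one_le_pow _ _ hx
    have h6 : x ≤ 2 := by
      by_contra hc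
      push_neg at hc
      nlinarith
    omega

set_option maxHeartbeats 1000000 in
theorem xn_add_ym_eq_zk_not_PR (n m k : ℕ) (hn : 0 < n) (hm : 0 < m) (hk : 0 < k)
    (hkn : k ≠ n) (hkm : k ≠ m) :
    ∃ (r : ℕ) (χ : ℕ → Fin r),
      ∀ x y z : ℕ, 0 < x → 0 < y → 0 < z →
        χ x = χ y → χ y = χ z → x ^ n + y ^ m = z ^ k →
          x = 2 ∧ y = 2 ∧ z = 2 := by
  have hlog1 : Real.log n ≠ Real.log k := log_ne_of_ne hn hk (Ne.symm hkn)
  have hlog2 : Real.log m ≠ Real.log k := log_ne_of_ne hm hk (Ne.symm hkm)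
  set d1 : ℝ := |Real.log n - Real.log k| with hd1
  set d2 : ℝ := |Real.log m - Real.log k| with hd2
  have hd1p : 0 < d1 := abs_pos.mpr (sub_ne_zero.mpr hlog1)
  have hd2p : 0 < d2 := abs_pos.mpr (sub_ne_zero.mpr hlog2)
  set δ : ℝ := min d1 d2 with hδdef
  have hδ : 0 < δ := lt_min hd1p hd2p
  obtain ⟨X₀, hX₀3, hXlog⟩ : ∃ X₀ : ℕ, 3 ≤ X₀ ∧ 8 * Real.log 2 / δ ≤ Real.log X₀ := by
    refine ⟨max 3 ⌈Real.exp (8 * Real.log 2 / δ)⌉₊, le_max_left _ _, ?_⟩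
    have h1 : Real.exp (8 * Real.log 2 / δ) ≤ ((max 3 ⌈Real.exp (8 * Real.log 2 / δ)⌉₊ : ℕ):ℝ) := by
      refine le_trans (Nat.le_ceil _) ?_
      exact_mod_cast Nat.cast_le.mpr (le_max_right _ _)
    calc 8 * Real.log 2 / δ = Real.log (Real.exp (8 * Real.log 2 / δ)) :=
          (Real.log_exp _).symm
      _ ≤ _ := Real.log_le_log (Real.exp_pos _) h1
  set N : ℕ := 2 * X₀ ^ (n + m) with hNdef
  set f : ℕ → (ZMod 2 × ZMod 4) × (ZMod 2 × ZMod 4) × ZMod (N+1) := fun t =>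
    (((⌊Real.log (Real.log t) / d1⌋ : ZMod 2),
      (⌊4 * Int.fract (Real.log (Real.log t) / d1)⌋ : ZMod 4)),
     ((⌊Real.log (Real.log t) / d2⌋ : ZMod 2),
      (⌊4 * Int.fract (Real.log (Real.log t) / d2)⌋ : ZMod 4)),
     ((min t N : ℕ) : ZMod (N+1))) with hf
  refine ⟨Fintype.card ((ZMod 2 × ZMod 4) × (ZMod 2 × ZMod 4) × ZMod (N+1)),
    (Fintype.equivFin _) ∘ f, ?_⟩
  intro x y z hx hy hz hxy hyz heq
  have hfxy : f x = f y := (Fintype.equivFin _).injective hxy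
  have hfyz : f y = f z := (Fintype.equivFin _).injective hyz
  have hfxz : f x = f z := hfxy.trans hfyz
  rw [hf] at hfxy hfyz hfxz
  simp only [Prod.mk.injEq] at hfxy hfyz hfxz
  obtain ⟨⟨hp1, hw1⟩, ⟨_, _⟩, hminxz⟩ := hfxz
  obtain ⟨_, _, hminxy⟩ := hfxy
  obtain ⟨_, ⟨hp2, hw2⟩, _⟩ := hfyz
  -- basic positivity
  have hxn1 : 1 ≤ x ^ n := Nat.one_le_pow _ _ hx
  have hym1 : 1 ≤ y ^ m := Nat.one_le_pow _ _ hy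
  have hz2 : 2 ≤ z := by
    by_contra hc
    push_neg at hc
    have hzk : z ^ k ≤ 1 := by
      calc z ^ k ≤ 1 ^ k := Nat.pow_le_pow_left (by omega) k
        _ = 1 := one_pow k
    omega
  have hX₀1 : 1 ≤ X₀ := by omega
  have hT : X₀ ^ n ≤ X₀ ^ (n+m) := Nat.pow_le_pow_right hX₀1 (by omega)
  have hT2 : X₀ ^ m ≤ X₀ ^ (n+m) := Nat.pow_le_pow_right hX₀1 (by omega)
  have hTX : X₀ ≤ X₀ ^ (n+m) := Nat.le_self_pow (by omega) _
  -- all of x, y, z are ≤ N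
  have hbound : x ≤ N ∧ y ≤ N ∧ z ≤ N := by
    by_cases hcase : y ^ m ≤ x ^ n
    · -- x is bounded
      have hxle : x ≤ X₀ := by
        by_contra hc
        push_neg at hc
        refine core n k hn hk hlog1 d1 hd1 δ hδ (min_le_left _ _) X₀ hXlog x z hc hz2
          ?_ ?_ ?_ ?_
        · exact_mod_cast (show x ^ n < z ^ k by omega)
        · push_cast
          exact_mod_cast (show ((z ^ k : ℕ) : ℝ) ≤ 2 * ((x ^ n : ℕ) : ℝ) by
            exact_mod_cast (by omega : z ^ k ≤ 2 * x ^ n))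
        · exact par_dvd hp1
        · exact win_eq hw1
      have hxnB : x ^ n ≤ X₀ ^ (n+m) := le_trans (Nat.pow_le_pow_left hxle n) hT
      have hyB : y ≤ N := by
        have : y ≤ y ^ m := Nat.le_self_pow (by omega) _
        omega
      have hzB : z ≤ N := by
        have : z ≤ z ^ k := Nat.le_self_pow (by omega) _
        omega
      exact ⟨by omega, hyB, hzB⟩
    · push_neg at hcase
      have hyle : y ≤ X₀ := by
        by_contra hc
        push_neg at hc
        refine core m k hm hk hlog2 d2 hd2 δ hδ (min_le_right _ _) X₀ hXlog y z hc hz2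
          ?_ ?_ ?_ ?_
        · exact_mod_cast (show y ^ m < z ^ k by omega)
        · push_cast
          exact_mod_cast (show ((z ^ k : ℕ) : ℝ) ≤ 2 * ((y ^ m : ℕ) : ℝ) by
            exact_mod_cast (by omega : z ^ k ≤ 2 * y ^ m))
        · exact par_dvd hp2
        · exact win_eq hw2
      have hymB : y ^ m ≤ X₀ ^ (n+m) := le_trans (Nat.pow_le_pow_left hyle m) hT2
      have hxB : x ≤ N := by
        have : x ≤ x ^ n := Nat.le_self_pow (by omega) _
        omega
      have hzB : z ≤ N := by
        have : z ≤ z ^ k := Nat.le_self_pow (by omega) _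
        omega
      exact ⟨hxB, by omega, hzB⟩
  obtain ⟨hxN, hyN, hzN⟩ := hbound
  -- min coordinate gives x = y = z
  have hxy' : x = y := by
    have h := (ZMod.natCast_eq_natCast_iff' _ _ _).mp hminxy
    rw [Nat.mod_eq_of_lt (by omega : min x N < N + 1),
      Nat.mod_eq_of_lt (by omega : min y N < N + 1)] at h
    rw [min_eq_left hxN, min_eq_left hyN] at h
    exact h
  have hxz' : x = z := by
    have h := (ZMod.natCast_eq_natCast_iff' _ _ _).mp hminxz
    rw [Nat.mod_eq_of_lt (by omega : min x N < N + 1),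
      Nat.mod_eq_of_lt (by omega : min z N < N + 1)] at h
    rw [min_eq_left hxN, min_eq_left hzN] at h
    exact h
  subst hxy' hxz'
  have hx2 : x = 2 := endg n m k x hn hm hx heq
  exact ⟨hx2, hx2, hx2⟩
end

section
/- Let a, b, c, n, m be integers with n < m, n, m ≥ 1, and suppose there is a prime p dividing c but not dividing a + b. Then the equation a*x^n + b*y^n = c*z^m is not partition regular on the positive integers, except possibly for constant solutions: there exists a finite coloring of the positive integers under which every monochromatic solution (x, y, z) satisfies x = y = z. -/
/-!
Colour `t` by its `p`-adic valuation `v` (its residue modulo `T = max A B + 1` and whether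
`v < T`), by its last nonzero `p`-adic digit, and by the parities of
`⌊log_{m/n} |(m - n) v - e|⌋` for `e = A - C` and `e = B - C`, where `A, B, C` are the
valuations of `a, b, c`; then `C ≥ 1` and `A = 0` or `B = 0`.

In a monochromatic solution with valuations `α, β, γ`, the valuation of the left side is
`A + n α` or `B + n β` if these differ; if they agree, the colouring forces `α = β`, and equal
last digits with `p ∤ a + b` make it `n α`. Equating with `C + m γ` gives `m γ - n σ = D - C`
for some `σ ∈ {α, β}` and `D ∈ {A, B}`. If `σ ≠ γ`, then `|(m - n) σ - e|` is exactly `m / n`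
times `|(m - n) γ - e|`, so the two floor-logarithms differ by one and have different parities.
If `σ = γ`, then `γ < D ≤ max A B`, so the colouring forces `α = β = γ`, which contradicts
`A = 0 ∨ B = 0`. Thus there is no monochromatic solution at all.
-/

open Real

noncomputable def logLevel (m n : ℕ) (e : ℤ) (s : ℕ) : ℤ :=
  ⌊logb ((m : ℝ) / n) |((m : ℝ) - n) * s - e|⌋

lemma logLevel_eq_add_one {m n : ℕ} (hn : 0 < n) (hnm : n < m) {e : ℤ} {σ γ : ℕ}
    (h : (m : ℤ) * γ - n * σ = e) (hne : σ ≠ γ) : logLevel m n e σ = logLevel m n e γ + 1 := by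
  have hnR : (0 : ℝ) < n := by exact_mod_cast hn
  have hq : 1 < (m : ℝ) / n := (one_lt_div hnR).mpr (by exact_mod_cast hnm)
  have hR : (m : ℝ) * γ - n * σ = e := by exact_mod_cast h
  have hrel : ((m : ℝ) - n) * σ - e = (m / n) * (((m : ℝ) - n) * γ - e) := by
    field_simp
    linear_combination (n - (m : ℝ)) * hR
  have hw : ((m : ℝ) - n) * γ - e ≠ 0 := by
    intro hw
    rw [hw, mul_zero] at hrel
    have : ((m : ℝ) - n) * (σ - γ) = 0 := by linear_combination hrel - hw
    rcases mul_eq_zero.mp this with h0 | h0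
    · exact hnm.ne' (by exact_mod_cast sub_eq_zero.mp h0)
    · exact hne (by exact_mod_cast sub_eq_zero.mp h0)
  rw [logLevel, logLevel, hrel, abs_mul, abs_of_pos (by linarith),
    logb_mul (by linarith) (abs_ne_zero.mpr hw), logb_self_eq_one hq, add_comm, Int.floor_add_one]

lemma eq_of_even_logLevel_iff {m n : ℕ} (hn : 0 < n) (hnm : n < m) {e : ℤ} {σ γ : ℕ}
    (h : (m : ℤ) * γ - n * σ = e) (hpar : Even (logLevel m n e σ) ↔ Even (logLevel m n e γ)) :
    σ = γ := by
  by_contra hne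
  rw [logLevel_eq_add_one hn hnm h hne, Int.even_add_one] at hpar
  exact iff_not_self hpar.symm

lemma eq_of_add_mul_eq_of_modEq {n T A B α β : ℕ} (hn : 1 ≤ n) (hA : A < T) (hB : B < T)
    (h : A + n * α = B + n * β) (hmod : α ≡ β [MOD T]) : α = β := by
  wlog hle : α ≤ β generalizing A B α β
  · exact (this hB hA h.symm hmod.symm (by omega)).symm
  obtain ⟨k, hk⟩ := (Nat.modEq_iff_dvd' hle).mp hmod
  have hβ : β = α + T * k := by omega
  rcases Nat.eq_zero_or_pos k with rfl | hk0
  · simpa using hβ.symm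
  · subst hβ
    nlinarith [Nat.mul_le_mul hn (Nat.le_mul_of_pos_right T hk0)]

lemma eq_and_lt_of_even_logLevel_iff {m n C D σ γ : ℕ} (hn : 0 < n) (hnm : n < m) (hC : 1 ≤ C)
    (h : C + m * γ = D + n * σ)
    (hpar : Even (logLevel m n ((D : ℤ) - C) σ) ↔ Even (logLevel m n ((D : ℤ) - C) γ)) :
    σ = γ ∧ γ < D := by
  obtain rfl := eq_of_even_logLevel_iff hn hnm (by linarith [congrArg (Nat.cast (R := ℤ)) h]) hpar
  exact ⟨rfl, by nlinarith [Nat.mul_le_mul_right σ hnm]⟩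

noncomputable def valuationColor (m n A B C v : ℕ) :
    Bool × ZMod (max A B + 1) × Bool × Bool :=
  (decide (v < max A B + 1), v, decide (Even (logLevel m n ((A : ℤ) - C) v)),
    decide (Even (logLevel m n ((B : ℤ) - C) v)))

lemma false_of_valuationColor_eq {m n A B C α β γ : ℕ} (hn : 1 ≤ n) (hnm : n < m) (hC : 1 ≤ C)
    (hAB : A = 0 ∨ B = 0)
    (hxy : valuationColor m n A B C α = valuationColor m n A B C β)
    (hyz : valuationColor m n A B C β = valuationColor m n A B C γ)
    (hlt : A + n * α < B + n * β → C + m * γ = A + n * α)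
    (hgt : B + n * β < A + n * α → C + m * γ = B + n * β)
    (heq : α = β → C + m * γ = n * α) : False := by
  set T := max A B + 1
  simp only [valuationColor, Prod.mk.injEq, decide_eq_decide, ZMod.natCast_eq_natCast_iff]
    at hxy hyz
  obtain ⟨hTxy, hmodxy, hAxy, hBxy⟩ := hxy
  obtain ⟨hTyz, hmodyz, hAyz, hByz⟩ := hyz
  have hAT : A < T := Nat.lt_succ_of_le (le_max_left A B)
  have hBT : B < T := Nat.lt_succ_of_le (le_max_right A B)
  have hsmall : γ < T → α = γ ∧ β = γ := by
    intro hγ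
    have hβ : β < T := hTyz.mpr hγ
    have hα : α < T := hTxy.mpr hβ
    exact ⟨(hmodxy.trans hmodyz).eq_of_lt_of_lt hα hγ, hmodyz.eq_of_lt_of_lt hβ hγ⟩
  rcases lt_trichotomy (A + n * α) (B + n * β) with h | h | h
  · obtain ⟨rfl, hγA⟩ := eq_and_lt_of_even_logLevel_iff hn hnm hC (hlt h) (hAxy.trans hAyz)
    obtain ⟨-, rfl⟩ := hsmall (by omega)
    omega
  · have hαβ := eq_of_add_mul_eq_of_modEq hn hAT hBT h hmodxy
    subst hαβ
    obtain rfl : A = 0 := by omega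
    obtain ⟨-, hγ⟩ := eq_and_lt_of_even_logLevel_iff (D := 0) hn hnm hC
      (by rw [heq rfl, zero_add]) (hAxy.trans hAyz)
    omega
  · obtain ⟨rfl, hγB⟩ := eq_and_lt_of_even_logLevel_iff hn hnm hC (hgt h) hByz
    obtain ⟨rfl, -⟩ := hsmall (by omega)
    omega

section padic

variable {p : ℕ}

lemma padicValInt_eq_zero_or_of_not_dvd_add {a b : ℤ} (h : ¬ (p : ℤ) ∣ a + b) :
    padicValInt p a = 0 ∨ padicValInt p b = 0 := by
  by_contra! hab
  exact h (dvd_add (not_imp_comm.mp padicValInt.eq_zero_of_not_dvd hab.1)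
    (not_imp_comm.mp padicValInt.eq_zero_of_not_dvd hab.2))

variable [Fact p.Prime]

lemma padicValRat_add_eq_of_lt {q r : ℚ} (hqr : q + r ≠ 0) (hq : q ≠ 0) (hr : r ≠ 0) {i j : ℕ}
    (hi : padicValRat p q = i) (hj : padicValRat p r = j) (hij : i < j) :
    padicValRat p (q + r) = i := by
  rw [padicValRat.add_eq_of_lt hqr hq hr (by rw [hi, hj]; exact_mod_cast hij), hi]

lemma not_dvd_mul_pow_add_mul_pow {a b X Y : ℤ} (hab : ¬ (p : ℤ) ∣ a + b) (hX : ¬ (p : ℤ) ∣ X)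
    (hXY : (X : ZMod p) = Y) (n : ℕ) : ¬ (p : ℤ) ∣ a * X ^ n + b * Y ^ n := by
  simp only [← ZMod.intCast_zmod_eq_zero_iff_dvd, Int.cast_add, Int.cast_mul, Int.cast_pow] at *
  rw [← hXY, ← add_mul]
  exact mul_ne_zero hab (pow_ne_zero n hX)

lemma padicValRat_intCast_mul_natCast_pow {u : ℤ} (hu : u ≠ 0) {t : ℕ} (ht : t ≠ 0) (k : ℕ) :
    padicValRat p (u * (t : ℚ) ^ k) = ((padicValInt p u + k * t.factorization p : ℕ) : ℤ) := by
  rw [padicValRat.mul (by exact_mod_cast hu) (by positivity), padicValRat.pow, padicValRat.of_int,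
    padicValRat.of_nat, Nat.factorization_def t Fact.out]
  push_cast
  ring

lemma padicValRat_mul_pow_add_mul_pow {a b : ℤ} (hab : ¬ (p : ℤ) ∣ a + b) {x y : ℕ} (hx : x ≠ 0)
    (hv : x.factorization p = y.factorization p)
    (hd : ((ordCompl[p] x : ℕ) : ZMod p) = (ordCompl[p] y : ℕ)) (n : ℕ) :
    padicValRat p (a * (x : ℚ) ^ n + b * (y : ℚ) ^ n) = n * x.factorization p := by
  have hxX := Nat.ordProj_mul_ordCompl_eq_self x p
  have hyY : p ^ x.factorization p * ordCompl[p] y = y := by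
    rw [hv]; exact Nat.ordProj_mul_ordCompl_eq_self y p
  have hpX := Nat.not_dvd_ordCompl (Fact.out : p.Prime) hx
  generalize ordCompl[p] x = X at hxX hpX hd
  generalize ordCompl[p] y = Y at hyY hd
  generalize x.factorization p = k at hxX hyY ⊢
  subst hxX hyY
  have hw : ¬ (p : ℤ) ∣ a * (X : ℤ) ^ n + b * (Y : ℤ) ^ n :=
    not_dvd_mul_pow_add_mul_pow hab (Int.natCast_dvd_natCast.not.mpr hpX) (by simpa using hd) n
  have hw0 : a * (X : ℤ) ^ n + b * (Y : ℤ) ^ n ≠ 0 := fun h => hw (by rw [h]; exact dvd_zero _)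
  have hsplit : a * ((p ^ k * X : ℕ) : ℚ) ^ n + b * ((p ^ k * Y : ℕ) : ℚ) ^ n
      = (p : ℚ) ^ (n * k) * ((a * (X : ℤ) ^ n + b * (Y : ℤ) ^ n : ℤ) : ℚ) := by
    push_cast; ring
  rw [hsplit, padicValRat.mul (pow_ne_zero _ (by exact_mod_cast (Fact.out : p.Prime).ne_zero))
      (by exact_mod_cast hw0), padicValRat.pow, padicValRat.self (Fact.out : p.Prime).one_lt,
    padicValRat.of_int, padicValInt.eq_zero_of_not_dvd hw]
  push_cast
  ring

end padic

-- Without the ascription to `ℕ`, `ordCompl[p] t` would be computed by division in `ZMod p`.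
noncomputable def color (p m n A B C t : ℕ) :
    (Bool × ZMod (max A B + 1) × Bool × Bool) × ZMod p :=
  (valuationColor m n A B C (t.factorization p), ((ordCompl[p] t : ℕ) : ZMod p))

theorem axn_byn_eq_czm_not_PR_of_lt_general (a b c : ℤ) (ha : a ≠ 0) (hb : b ≠ 0) (hc : c ≠ 0)
    (n m : ℕ) (hn : 1 ≤ n) (hnm : n < m)
    (p : ℕ) (hp : p.Prime) (hpc : (p : ℤ) ∣ c) (hpab : ¬ (p : ℤ) ∣ (a + b)) :
    ∃ (r : ℕ) (χ : ℕ → Fin r),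
      ∀ x y z : ℕ, 0 < x → 0 < y → 0 < z →
        χ x = χ y → χ y = χ z →
          a * (x : ℤ) ^ n + b * (y : ℤ) ^ n = c * (z : ℤ) ^ m →
            x = y ∧ y = z := by
  have : Fact p.Prime := ⟨hp⟩
  set A := padicValInt p a
  set B := padicValInt p b
  set C := padicValInt p c
  have hC : 1 ≤ C := ((padicValInt_dvd_iff 1 c).mp (by simpa using hpc)).resolve_left hc
  have hAB : A = 0 ∨ B = 0 := padicValInt_eq_zero_or_of_not_dvd_add hpab
  refine ⟨_, Fintype.equivFin _ ∘ color p m n A B C, fun x y z hx hy hz hxy hyz hsol => ?_⟩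
  simp only [Function.comp_apply, EmbeddingLike.apply_eq_iff_eq, color, Prod.mk.injEq] at hxy hyz
  have hsolQ : (a : ℚ) * (x : ℚ) ^ n + b * (y : ℚ) ^ n = c * (z : ℚ) ^ m := by exact_mod_cast hsol
  have hvx := padicValRat_intCast_mul_natCast_pow (p := p) ha hx.ne' n
  have hvy := padicValRat_intCast_mul_natCast_pow (p := p) hb hy.ne' n
  have hval : padicValRat p (a * (x : ℚ) ^ n + b * (y : ℚ) ^ n)
      = ((C + m * z.factorization p : ℕ) : ℤ) := by
    rw [hsolQ, padicValRat_intCast_mul_natCast_pow hc hz.ne' m]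
  have hax : (a : ℚ) * (x : ℚ) ^ n ≠ 0 := by positivity
  have hby : (b : ℚ) * (y : ℚ) ^ n ≠ 0 := by positivity
  have hsum : (a : ℚ) * (x : ℚ) ^ n + b * (y : ℚ) ^ n ≠ 0 := hsolQ ▸ by positivity
  refine (false_of_valuationColor_eq hn hnm hC hAB hxy.1 hyz.1 (fun h => ?_) (fun h => ?_)
    (fun h => ?_)).elim
  · exact_mod_cast hval.symm.trans (padicValRat_add_eq_of_lt hsum hax hby hvx hvy h)
  · rw [add_comm] at hsum hval
    exact_mod_cast hval.symm.trans (padicValRat_add_eq_of_lt hsum hby hax hvy hvx h)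
  · exact_mod_cast hval.symm.trans (padicValRat_mul_pow_add_mul_pow hpab hx.ne' h hxy.2 n)

theorem axn_byn_eq_czm_not_PR_of_lt (a b c : ℤ) (ha : a ≠ 0) (hb : b ≠ 0) (hc : c ≠ 0)
    (n m : ℕ) (hn : 1 ≤ n) (hm : 1 ≤ m) (hnm : n < m)
    (p : ℕ) (hp : p.Prime) (hpc : (p : ℤ) ∣ c) (hpab : ¬ (p : ℤ) ∣ (a + b)) :
    ∃ (r : ℕ) (χ : ℕ → Fin r),
      ∀ x y z : ℕ, 0 < x → 0 < y → 0 < z →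
        χ x = χ y → χ y = χ z →
          a * (x : ℤ) ^ n + b * (y : ℤ) ^ n = c * (z : ℤ) ^ m →
            x = y ∧ y = z :=
  axn_byn_eq_czm_not_PR_of_lt_general a b c ha hb hc n m hn hnm p hp hpc hpab
end

section
/- Let a, b, c be odd integers and let n₁ < n₂ < n₃ be positive integers. Then the equation a*x^{n₁} + b*y^{n₂} = c*z^{n₃} is not partition regular on the positive integers. -/
private lemma odd3 {U V W : ℤ} (hU : Odd U) (hV : Odd V) (hW : Odd W) :
    U + V + W ≠ 0 := by
  rcases hU with ⟨i, hi⟩; rcases hV with ⟨j, hj⟩; rcases hW with ⟨k, hk⟩; omega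

private lemma tri_min {A B C : ℕ} {U V W : ℤ} (hU : Odd U)
    (hAB : A < B) (hAC : A < C)
    (h : 2 ^ A * U + 2 ^ B * V + 2 ^ C * W = 0) : False := by
  have hB : (2 : ℤ) ^ (A + 1) ∣ 2 ^ B * V := dvd_mul_of_dvd_left (pow_dvd_pow 2 hAB) _
  have hC : (2 : ℤ) ^ (A + 1) ∣ 2 ^ C * W := dvd_mul_of_dvd_left (pow_dvd_pow 2 hAC) _
  have hA : (2 : ℤ) ^ (A + 1) ∣ 2 ^ A * U := by
    have e : 2 ^ A * U = -(2 ^ B * V) + -(2 ^ C * W) := by linarith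
    rw [e]; exact dvd_add (dvd_neg.mpr hB) (dvd_neg.mpr hC)
  rw [pow_succ] at hA
  have h2U : (2 : ℤ) ∣ U := (mul_dvd_mul_iff_left (pow_ne_zero A (two_ne_zero))).mp hA
  rcases hU with ⟨k, hk⟩
  rcases h2U with ⟨t, ht⟩
  omega

private lemma factor_pair {N ni nj A B : ℕ} (hni : 0 < ni) (hnj : 0 < nj) (hne : ni ≠ nj)
    (hiN : ni ≤ N) (hjN : nj ≤ N) (hA : 0 < A) (hB : 0 < B)
    (hcong : ∀ p, p ≤ N → A.factorization p % (N + 1) = B.factorization p % (N + 1))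
    (h : ni * A = nj * B) : False := by
  have hfac : ∀ p : ℕ,
      ni.factorization p + A.factorization p = nj.factorization p + B.factorization p := by
    intro p
    have h1 := Nat.factorization_mul hni.ne' hA.ne'
    have h2 := Nat.factorization_mul hnj.ne' hB.ne'
    have h3 : (ni * A).factorization p = (nj * B).factorization p := by rw [h]
    rw [h1, h2] at h3
    simpa using h3
  have hex : ∃ p, Nat.Prime p ∧ ni.factorization p ≠ nj.factorization p := by
    by_contra hcon
    push_neg at hcon
    refine hne (Nat.eq_of_factorization_eq hni.ne' hnj.ne' fun p => ?_)
    by_cases hp : p.Prime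
    · exact hcon p hp
    · rw [Nat.factorization_eq_zero_of_not_prime _ hp,
        Nat.factorization_eq_zero_of_not_prime _ hp]
  obtain ⟨p, hp, hpne⟩ := hex
  have hpN : p ≤ N := by
    rcases Nat.eq_zero_or_pos (ni.factorization p) with h0 | hpos
    · have hnz : nj.factorization p ≠ 0 := by
        intro h0'
        exact hpne (by rw [h0, h0'])
      exact le_trans (Nat.le_of_dvd hnj (Nat.dvd_of_factorization_pos hnz)) hjN
    · exact le_trans (Nat.le_of_dvd hni (Nat.dvd_of_factorization_pos hpos.ne')) hiN
  have hbi : ni.factorization p < N + 1 :=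
    lt_of_lt_of_le (Nat.factorization_lt p hni.ne') (by omega)
  have hbj : nj.factorization p < N + 1 :=
    lt_of_lt_of_le (Nat.factorization_lt p hnj.ne') (by omega)
  have hmod : A.factorization p ≡ B.factorization p [MOD N + 1] := hcong p hpN
  have h5 : ni.factorization p + A.factorization p
      ≡ nj.factorization p + A.factorization p [MOD N + 1] := by
    calc ni.factorization p + A.factorization p
        = nj.factorization p + B.factorization p := hfac p
      _ ≡ nj.factorization p + A.factorization p [MOD N + 1] :=
          Nat.ModEq.add_left _ hmod.symm
  have h6 : ni.factorization p ≡ nj.factorization p [MOD N + 1] :=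
    Nat.ModEq.add_right_cancel' _ h5
  have := h6
  unfold Nat.ModEq at this
  rw [Nat.mod_eq_of_lt hbi, Nat.mod_eq_of_lt hbj] at this
  exact hpne this

theorem odd_coeffs_three_exponents_not_PR (a b c : ℤ) (ha : Odd a) (hb : Odd b) (hc : Odd c)
    (n₁ n₂ n₃ : ℕ) (h1 : 0 < n₁) (h12 : n₁ < n₂) (h23 : n₂ < n₃) :
    ∃ (r : ℕ) (χ : ℕ → Fin r),
      ¬ ∃ x y z : ℕ, 0 < x ∧ 0 < y ∧ 0 < z ∧
        χ x = χ y ∧ χ y = χ z ∧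
        a * (x : ℤ) ^ n₁ + b * (y : ℤ) ^ n₂ = c * (z : ℤ) ^ n₃ := by
  classical
  set g : ℕ → Bool × (Fin (n₃ + 1) → Fin (n₃ + 1)) := fun n =>
    (decide (n.factorization 2 = 0),
     fun i => ⟨(n.factorization 2).factorization i.val % (n₃ + 1),
       Nat.mod_lt _ (Nat.succ_pos n₃)⟩) with hg
  refine ⟨Fintype.card (Bool × (Fin (n₃ + 1) → Fin (n₃ + 1))),
    fun n => Fintype.equivFin _ (g n), ?_⟩
  rintro ⟨x, y, z, hx, hy, hz, hxy, hyz, heq⟩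
  have gxy : g x = g y := (Fintype.equivFin _).injective hxy
  have gyz : g y = g z := (Fintype.equivFin _).injective hyz
  set α := x.factorization 2 with hαd
  set β := y.factorization 2 with hβd
  set γ := z.factorization 2 with hγd
  have flag_xy : (α = 0) ↔ (β = 0) := by
    have := congrArg Prod.fst gxy
    simp only [hg] at this
    exact decide_eq_decide.mp this
  have flag_yz : (β = 0) ↔ (γ = 0) := by
    have := congrArg Prod.fst gyz
    simp only [hg] at this
    exact decide_eq_decide.mp this
  have cong_xy : ∀ p, p ≤ n₃ →
      α.factorization p % (n₃ + 1) = β.factorization p % (n₃ + 1) := by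
    intro p hp
    have := congrFun (congrArg Prod.snd gxy) ⟨p, Nat.lt_succ_of_le hp⟩
    simp only [hg] at this
    exact congrArg Fin.val this
  have cong_yz : ∀ p, p ≤ n₃ →
      β.factorization p % (n₃ + 1) = γ.factorization p % (n₃ + 1) := by
    intro p hp
    have := congrFun (congrArg Prod.snd gyz) ⟨p, Nat.lt_succ_of_le hp⟩
    simp only [hg] at this
    exact congrArg Fin.val this
  have cong_xz : ∀ p, p ≤ n₃ →
      α.factorization p % (n₃ + 1) = γ.factorization p % (n₃ + 1) :=
    fun p hp => (cong_xy p hp).trans (cong_yz p hp)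
  -- decompositions
  obtain ⟨u, hu2, hxu⟩ : ∃ u : ℕ, ¬ 2 ∣ u ∧ x = 2 ^ α * u :=
    ⟨ordCompl[2] x, Nat.not_dvd_ordCompl Nat.prime_two hx.ne',
      (Nat.ordProj_mul_ordCompl_eq_self x 2).symm⟩
  obtain ⟨v, hv2, hyv⟩ : ∃ v : ℕ, ¬ 2 ∣ v ∧ y = 2 ^ β * v :=
    ⟨ordCompl[2] y, Nat.not_dvd_ordCompl Nat.prime_two hy.ne',
      (Nat.ordProj_mul_ordCompl_eq_self y 2).symm⟩
  obtain ⟨w, hw2, hzw⟩ : ∃ w : ℕ, ¬ 2 ∣ w ∧ z = 2 ^ γ * w :=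
    ⟨ordCompl[2] z, Nat.not_dvd_ordCompl Nat.prime_two hz.ne',
      (Nat.ordProj_mul_ordCompl_eq_self z 2).symm⟩
  have huZ : Odd (u : ℤ) := by
    rw [Int.odd_coe_nat]; exact Nat.odd_iff.mpr (Nat.two_dvd_ne_zero.mp hu2)
  have hvZ : Odd (v : ℤ) := by
    rw [Int.odd_coe_nat]; exact Nat.odd_iff.mpr (Nat.two_dvd_ne_zero.mp hv2)
  have hwZ : Odd (w : ℤ) := by
    rw [Int.odd_coe_nat]; exact Nat.odd_iff.mpr (Nat.two_dvd_ne_zero.mp hw2)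
  have hxZ : (x : ℤ) = 2 ^ α * u := by exact_mod_cast congrArg (Nat.cast : ℕ → ℤ) hxu
  have hyZ : (y : ℤ) = 2 ^ β * v := by exact_mod_cast congrArg (Nat.cast : ℕ → ℤ) hyv
  have hzZ : (z : ℤ) = 2 ^ γ * w := by exact_mod_cast congrArg (Nat.cast : ℕ → ℤ) hzw
  have e1 : a * (x : ℤ) ^ n₁ = 2 ^ (n₁ * α) * (a * (u : ℤ) ^ n₁) := by
    rw [hxZ, mul_pow, ← pow_mul, Nat.mul_comm α n₁]; ring
  have e2 : b * (y : ℤ) ^ n₂ = 2 ^ (n₂ * β) * (b * (v : ℤ) ^ n₂) := by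
    rw [hyZ, mul_pow, ← pow_mul, Nat.mul_comm β n₂]; ring
  have e3 : c * (z : ℤ) ^ n₃ = 2 ^ (n₃ * γ) * (c * (w : ℤ) ^ n₃) := by
    rw [hzZ, mul_pow, ← pow_mul, Nat.mul_comm γ n₃]; ring
  have hmain : 2 ^ (n₁ * α) * (a * (u : ℤ) ^ n₁) + 2 ^ (n₂ * β) * (b * (v : ℤ) ^ n₂)
      + 2 ^ (n₃ * γ) * (-(c * (w : ℤ) ^ n₃)) = 0 := by
    rw [← e1, ← e2, mul_neg, ← e3]; linarith
  have hU : Odd (a * (u : ℤ) ^ n₁) := ha.mul huZ.pow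
  have hV : Odd (b * (v : ℤ) ^ n₂) := hb.mul hvZ.pow
  have hW : Odd (-(c * (w : ℤ) ^ n₃)) := (hc.mul hwZ.pow).neg
  -- if some pair of term valuations agree, all valuations are zero, contradiction
  have h2pos : 0 < n₂ := lt_trans h1 h12
  have h3pos : 0 < n₃ := lt_trans h2pos h23
  have case_eq : α = 0 → β = 0 → γ = 0 → False := by
    intro hα0 hβ0 hγ0
    rw [hα0, hβ0, hγ0] at hmain
    simp only [Nat.mul_zero, pow_zero, one_mul] at hmain
    exact odd3 hU hV hW hmain
  have pair : ∀ {ni nj A B : ℕ}, 0 < ni → 0 < nj → ni ≠ nj → ni ≤ n₃ → nj ≤ n₃ →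
      (∀ p, p ≤ n₃ → A.factorization p % (n₃ + 1) = B.factorization p % (n₃ + 1)) →
      ni * A = nj * B → A = 0 ∧ B = 0 := by
    intro ni nj A B hni hnj hne hiN hjN hcong hprod
    rcases Nat.eq_zero_or_pos A with h0 | hApos
    · refine ⟨h0, ?_⟩
      rw [h0, Nat.mul_zero] at hprod
      rcases Nat.mul_eq_zero.mp hprod.symm with h' | h'
      · omega
      · exact h'
    rcases Nat.eq_zero_or_pos B with h0' | hBpos
    · rw [h0', Nat.mul_zero] at hprod
      rcases Nat.mul_eq_zero.mp hprod with h' | h' <;> omega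
    exact absurd (factor_pair hni hnj hne hiN hjN hApos hBpos hcong hprod) not_false
  have pairTo0 : (n₁ * α = n₂ * β) ∨ (n₁ * α = n₃ * γ) ∨ (n₂ * β = n₃ * γ) → False := by
    rintro (h | h | h)
    · obtain ⟨hA0, hB0⟩ := pair h1 h2pos (Nat.ne_of_lt h12) (le_of_lt (lt_trans h12 h23))
        (le_of_lt h23) cong_xy h
      exact case_eq hA0 hB0 (flag_yz.mp hB0)
    · obtain ⟨hA0, hC0⟩ := pair h1 h3pos (Nat.ne_of_lt (lt_trans h12 h23))
        (le_of_lt (lt_trans h12 h23)) le_rfl cong_xz h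
      exact case_eq hA0 (flag_yz.mpr hC0) hC0
    · obtain ⟨hB0, hC0⟩ := pair h2pos h3pos (Nat.ne_of_lt h23) (le_of_lt h23) le_rfl cong_yz h
      exact case_eq (flag_xy.mpr hB0) hB0 hC0
  rcases lt_trichotomy (n₁ * α) (n₂ * β) with hAB | hAB | hAB
  · rcases lt_trichotomy (n₁ * α) (n₃ * γ) with hAC | hAC | hAC
    · exact tri_min hU hAB hAC hmain
    · exact pairTo0 (Or.inr (Or.inl hAC))
    · have hperm : 2 ^ (n₃ * γ) * (-(c * (w : ℤ) ^ n₃)) + 2 ^ (n₁ * α) * (a * (u : ℤ) ^ n₁)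
          + 2 ^ (n₂ * β) * (b * (v : ℤ) ^ n₂) = 0 := by linarith [hmain]
      exact tri_min hW hAC (lt_trans hAC hAB) hperm
  · exact pairTo0 (Or.inl hAB)
  · rcases lt_trichotomy (n₂ * β) (n₃ * γ) with hBC | hBC | hBC
    · have hperm : 2 ^ (n₂ * β) * (b * (v : ℤ) ^ n₂) + 2 ^ (n₁ * α) * (a * (u : ℤ) ^ n₁)
          + 2 ^ (n₃ * γ) * (-(c * (w : ℤ) ^ n₃)) = 0 := by linarith [hmain]
      exact tri_min hV hAB hBC hperm
    · exact pairTo0 (Or.inr (Or.inr hBC))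
    · have hperm : 2 ^ (n₃ * γ) * (-(c * (w : ℤ) ^ n₃)) + 2 ^ (n₂ * β) * (b * (v : ℤ) ^ n₂)
          + 2 ^ (n₁ * α) * (a * (u : ℤ) ^ n₁) = 0 := by linarith [hmain]
      exact tri_min hW hBC (lt_trans hBC hAB) hperm
end

section
/- For n = m and integers a, b, c with a + b ≠ 0, a ≠ c, b ≠ c, and a + b ≠ c, the equation a*x^n + b*y^n = c*z^n is not partition regular on the positive integers. -/
private lemma final_contra (p : ℕ) (hp : p.Prime) (S : ℤ) (e : ZMod p) (he : e ≠ 0)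
    (h : (S : ZMod p) * e = 0) (hS : S ≠ 0) (hb : |S| < p) : False := by
  haveI : Fact p.Prime := ⟨hp⟩
  have h0 : (S : ZMod p) = 0 := by
    rcases mul_eq_zero.mp h with h' | h'
    · exact h'
    · exact absurd h' he
  have hdvd : (p : ℤ) ∣ S := (ZMod.intCast_zmod_eq_zero_iff_dvd S p).mp h0
  have : (p : ℤ) ≤ |S| := Int.le_of_dvd (abs_pos.mpr hS) ((dvd_abs _ _).mpr hdvd)
  linarith

private lemma key_aux (p : ℕ) (hp : p.Prime) (a b c : ℤ) (t1 t2 t3 : ℕ) (U V W : ℤ)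
    (e : ZMod p) (hU : (U : ZMod p) = e) (hV : (V : ZMod p) = e) (hW : (W : ZMod p) = e)
    (he : e ≠ 0)
    (heq : a * (p : ℤ) ^ t1 * U + b * (p : ℤ) ^ t2 * V + c * (p : ℤ) ^ t3 * W = 0)
    (hbound : |a| + |b| + |c| < p)
    (hS : (if t1 = min t1 (min t2 t3) then a else 0) +
          (if t2 = min t1 (min t2 t3) then b else 0) +
          (if t3 = min t1 (min t2 t3) then c else 0) ≠ 0) : False := by
  haveI : Fact p.Prime := ⟨hp⟩
  set m := min t1 (min t2 t3) with hm
  have h1 : m ≤ t1 := min_le_left _ _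
  have h2 : m ≤ t2 := le_trans (min_le_right _ _) (min_le_left _ _)
  have h3 : m ≤ t3 := le_trans (min_le_right _ _) (min_le_right _ _)
  have e1 : (p:ℤ)^t1 = (p:ℤ)^m * (p:ℤ)^(t1-m) := by rw [← pow_add, Nat.add_sub_cancel' h1]
  have e2 : (p:ℤ)^t2 = (p:ℤ)^m * (p:ℤ)^(t2-m) := by rw [← pow_add, Nat.add_sub_cancel' h2]
  have e3 : (p:ℤ)^t3 = (p:ℤ)^m * (p:ℤ)^(t3-m) := by rw [← pow_add, Nat.add_sub_cancel' h3]
  rw [e1, e2, e3] at heq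
  have hpm : (p:ℤ)^m ≠ 0 := pow_ne_zero _ (by exact_mod_cast hp.pos.ne')
  have hD : a * (p:ℤ)^(t1-m) * U + b * (p:ℤ)^(t2-m) * V + c * (p:ℤ)^(t3-m) * W = 0 := by
    apply mul_left_cancel₀ hpm
    linear_combination heq
  have hZ : (a : ZMod p) * (p:ZMod p)^(t1-m) * e + (b : ZMod p) * (p:ZMod p)^(t2-m) * e
      + (c : ZMod p) * (p:ZMod p)^(t3-m) * e = 0 := by
    have h := congrArg (fun z : ℤ => (z : ZMod p)) hD
    push_cast at h
    rw [hU, hV, hW] at h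
    simpa using h
  have hre : ∀ t : ℕ, m ≤ t → ((p:ZMod p))^(t-m) = if t = m then 1 else 0 := by
    intro t ht
    by_cases h : t = m
    · simp [h]
    · have h' : t - m ≠ 0 := by omega
      rw [ZMod.natCast_self, zero_pow h', if_neg h]
  rw [hre t1 h1, hre t2 h2, hre t3 h3] at hZ
  set S : ℤ := (if t1 = m then a else 0) + (if t2 = m then b else 0) + (if t3 = m then c else 0)
    with hSdef
  refine final_contra p hp S e he ?_ hS ?_
  · rw [hSdef]
    split_ifs at hZ ⊢ <;> push_cast <;> linear_combination hZ
  · have hb : |S| ≤ |a| + |b| + |c| := by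
      rw [hSdef]
      have b1 : |(if t1 = m then a else 0)| ≤ |a| := by split_ifs <;> simp
      have b2 : |(if t2 = m then b else 0)| ≤ |b| := by split_ifs <;> simp
      have b3 : |(if t3 = m then c else 0)| ≤ |c| := by split_ifs <;> simp
      exact le_trans (abs_add_three _ _ _) (add_le_add (add_le_add b1 b2) b3)
    linarith

theorem axn_byn_eq_czn_not_PR (a b c : ℤ) (n : ℕ) (hn : 1 ≤ n)
    (hab : a + b ≠ 0) (hac : a ≠ c) (hbc : b ≠ c) (habc : a + b ≠ c) :
    ∃ (r : ℕ) (χ : ℕ → Fin r),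
      ¬ ∃ x y z : ℕ, 0 < x ∧ 0 < y ∧ 0 < z ∧
        χ x = χ y ∧ χ y = χ z ∧
        a * (x : ℤ) ^ n + b * (y : ℤ) ^ n = c * (z : ℤ) ^ n := by
  obtain ⟨p, hpN, hp⟩ := Nat.exists_infinite_primes (a.natAbs + b.natAbs + c.natAbs + 1)
  haveI : Fact p.Prime := ⟨hp⟩
  haveI : NeZero p := ⟨hp.pos.ne'⟩
  refine ⟨p, fun m => ⟨(((ordCompl[p] m : ℕ) : ZMod p) ^ n).val, ZMod.val_lt _⟩, ?_⟩
  rintro ⟨x, y, z, hx, hy, hz, hxy, hyz, heq⟩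
  simp only [Fin.mk.injEq] at hxy hyz
  have hxy' : ((ordCompl[p] x : ℕ) : ZMod p) ^ n = ((ordCompl[p] y : ℕ) : ZMod p) ^ n :=
    ZMod.val_injective p hxy
  have hyz' : ((ordCompl[p] y : ℕ) : ZMod p) ^ n = ((ordCompl[p] z : ℕ) : ZMod p) ^ n :=
    ZMod.val_injective p hyz
  set ux := ordCompl[p] x with hux
  set uy := ordCompl[p] y with huy
  set uz := ordCompl[p] z with huz
  set I := x.factorization p * n with hI
  set J := y.factorization p * n with hJ
  set K := z.factorization p * n with hK
  -- decomposition of powers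
  have hxpow : (x:ℤ)^n = (p:ℤ)^I * (ux:ℤ)^n := by
    have h : x ^ n = p ^ I * ux ^ n := by
      conv_lhs => rw [← Nat.ordProj_mul_ordCompl_eq_self x p]
      rw [mul_pow, ← pow_mul]
    exact_mod_cast h
  have hypow : (y:ℤ)^n = (p:ℤ)^J * (uy:ℤ)^n := by
    have h : y ^ n = p ^ J * uy ^ n := by
      conv_lhs => rw [← Nat.ordProj_mul_ordCompl_eq_self y p]
      rw [mul_pow, ← pow_mul]
    exact_mod_cast h
  have hzpow : (z:ℤ)^n = (p:ℤ)^K * (uz:ℤ)^n := by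
    have h : z ^ n = p ^ K * uz ^ n := by
      conv_lhs => rw [← Nat.ordProj_mul_ordCompl_eq_self z p]
      rw [mul_pow, ← pow_mul]
    exact_mod_cast h
  -- the color
  set e : ZMod p := ((ux : ZMod p)) ^ n with he
  have hU : (((ux:ℤ)^n : ℤ) : ZMod p) = e := by push_cast; rfl
  have hV : (((uy:ℤ)^n : ℤ) : ZMod p) = e := by push_cast; rw [← hxy']
  have hW : (((uz:ℤ)^n : ℤ) : ZMod p) = e := by push_cast; rw [← hyz', ← hxy']
  have hene : e ≠ 0 := by
    apply pow_ne_zero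
    intro h0
    exact Nat.not_dvd_ordCompl hp hx.ne' ((ZMod.natCast_eq_zero_iff ux p).mp h0)
  -- exponents (with a trick for zero coefficients)
  set t1 := if a = 0 then J + K + 1 else I with ht1
  set t2 := if b = 0 then I + K + 1 else J with ht2
  set t3 := if c = 0 then I + J + 1 else K with ht3
  have hterm1 : a * (p:ℤ)^t1 * (ux:ℤ)^n = a * (x:ℤ)^n := by
    by_cases ha : a = 0
    · simp [ha]
    · rw [ht1, if_neg ha, hxpow]; ring
  have hterm2 : b * (p:ℤ)^t2 * (uy:ℤ)^n = b * (y:ℤ)^n := by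
    by_cases hb : b = 0
    · simp [hb]
    · rw [ht2, if_neg hb, hypow]; ring
  have hterm3 : (-c) * (p:ℤ)^t3 * (uz:ℤ)^n = (-c) * (z:ℤ)^n := by
    by_cases hc : c = 0
    · simp [hc]
    · rw [ht3, if_neg hc, hzpow]; ring
  refine key_aux p hp a b (-c) t1 t2 t3 _ _ _ e hU hV hW hene ?_ ?_ ?_
  · rw [hterm1, hterm2, hterm3]
    linear_combination heq
  · have h1 : |a| = (a.natAbs : ℤ) := Int.abs_eq_natAbs a
    have h2 : |b| = (b.natAbs : ℤ) := Int.abs_eq_natAbs b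
    have h3 : |(-c)| = (c.natAbs : ℤ) := by rw [abs_neg]; exact Int.abs_eq_natAbs c
    rw [h1, h2, h3]
    omega
  · simp only [ht1, ht2, ht3]
    split_ifs <;> omega
end

section
/- For every n ≥ 1, the equation x^n + y^n = z^{n+1} is not partition regular on the positive integers except for the constant solution x = y = z = 2: there exists a finite coloring of the positive integers such that every monochromatic solution (x, y, z) satisfies x = y = z = 2. -/
/-!
Numbers below `2 ^ (n + 1)` get a colour of their own, so a monochromatic solution among them
has `x = y = z`, and `2 x ^ n = x ^ (n + 1)` forces `x = 2`.

For large solutions with `y ≤ x`, put `M = ⌊log₂ x⌋` and `c = ⌊log₂ z⌋`; the equation pins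
`M n` and `c (n + 1)` within `n + 1` of each other. If also `M ≡ c [MOD 2n + 1]`, then
`M - c = (2n + 1) t` with `t ≥ 1`, and the levels `⌊(M + n) / (2n + 1)⌋ = t (n + 1)` and
`⌊(c + n) / (2n + 1)⌋ = t n` differ by the factor `(n + 1) / n`. The parity of
`⌊log_{(n+1)/n} B⌋` flips under that factor, so colouring by it separates `x` from `z`.
-/

open Real

theorem Int.floor_logb_mul_self {b x : ℝ} (hb : 1 < b) (hx : x ≠ 0) :
    ⌊logb b (x * b)⌋ = ⌊logb b x⌋ + 1 := by
  rw [logb_mul hx (by positivity), logb_self_eq_one hb, Int.floor_add_one]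

noncomputable def ratioParity (n B : ℕ) : Bool :=
  decide (Even ⌊logb ((n + 1) / n) B⌋)

theorem ratioParity_mul_succ {n t : ℕ} (hn : 1 ≤ n) (ht : t ≠ 0) :
    ratioParity n (t * (n + 1)) = !ratioParity n (t * n) := by
  have hn' : (0 : ℝ) < n := by exact_mod_cast hn
  have hb : (1 : ℝ) < (n + 1) / n := by rw [one_lt_div hn']; linarith
  have hcast : ((t * (n + 1) : ℕ) : ℝ) = (t * n : ℕ) * ((n + 1) / n) := by
    push_cast; field_simp
  have htn : ((t * n : ℕ) : ℝ) ≠ 0 := by positivity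
  simp only [ratioParity, hcast, Int.floor_logb_mul_self hb htn, Int.even_add_one, decide_not]

theorem log_two_bounds_of_pow_add_pow_eq_pow_succ {n x y z : ℕ} (hn : n ≠ 0) (hyx : y ≤ x)
    (hx : x ≠ 0) (hz : z ≠ 0) (h : x ^ n + y ^ n = z ^ (n + 1)) :
    Nat.log 2 x * n < (Nat.log 2 z + 1) * (n + 1) ∧
      Nat.log 2 z * (n + 1) < (Nat.log 2 x + 1) * n + 1 := by
  have hxlo := Nat.pow_log_le_self 2 hx
  have hxhi := Nat.lt_pow_succ_log_self one_lt_two x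
  have hzlo := Nat.pow_log_le_self 2 hz
  have hzhi := Nat.lt_pow_succ_log_self one_lt_two z
  constructor
  · rw [← Nat.pow_lt_pow_iff_right one_lt_two]
    calc 2 ^ (Nat.log 2 x * n) = (2 ^ Nat.log 2 x) ^ n := by rw [pow_mul]
      _ ≤ x ^ n := Nat.pow_le_pow_left hxlo n
      _ ≤ z ^ (n + 1) := h ▸ Nat.le_add_right _ _
      _ < (2 ^ (Nat.log 2 z + 1)) ^ (n + 1) := Nat.pow_lt_pow_left hzhi (by omega)
      _ = 2 ^ ((Nat.log 2 z + 1) * (n + 1)) := by rw [pow_mul]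
  · rw [← Nat.pow_lt_pow_iff_right one_lt_two]
    calc 2 ^ (Nat.log 2 z * (n + 1)) = (2 ^ Nat.log 2 z) ^ (n + 1) := by rw [pow_mul]
      _ ≤ z ^ (n + 1) := Nat.pow_le_pow_left hzlo (n + 1)
      _ ≤ 2 * x ^ n := by rw [← h, two_mul]; gcongr
      _ < 2 * (2 ^ (Nat.log 2 x + 1)) ^ n := by gcongr
      _ = 2 ^ ((Nat.log 2 x + 1) * n + 1) := by rw [← pow_mul, pow_succ, mul_comm]

theorem exists_levels_of_log_bounds {n M c : ℕ} (hM : n + 1 ≤ M)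
    (h₁ : M * n < (c + 1) * (n + 1)) (h₂ : c * (n + 1) < (M + 1) * n + 1)
    (hmod : M % (2 * n + 1) = c % (2 * n + 1)) :
    ∃ t ≠ 0, (M + n) / (2 * n + 1) = t * (n + 1) ∧ (c + n) / (2 * n + 1) = t * n := by
  have hcM : c < M := by
    by_contra! h
    nlinarith
  obtain ⟨t, ht⟩ := (Nat.modEq_iff_dvd' hcM.le).mp hmod.symm
  have hMc : M = c + (2 * n + 1) * t := by omega
  subst hMc
  have hc : (c + n) / (2 * n + 1) = t * n :=
    Nat.div_eq_of_lt_le (by nlinarith) (by nlinarith)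
  refine ⟨t, by rintro rfl; omega, ?_, hc⟩
  rw [add_right_comm, Nat.add_mul_div_left _ _ (by omega), hc, mul_add_one]

theorem eq_two_of_pow_add_pow_eq_pow_succ {n x : ℕ} (hx : 0 < x)
    (h : x ^ n + x ^ n = x ^ (n + 1)) : x = 2 := by
  rw [← two_mul, pow_succ, mul_comm] at h
  exact (Nat.eq_of_mul_eq_mul_left (pow_pos hx n) h).symm

noncomputable def coloring (n x : ℕ) : Fin (2 ^ (n + 1) + 1) × Fin (2 * n + 1) × Bool :=
  (⟨min x (2 ^ (n + 1)), by omega⟩, ⟨Nat.log 2 x % (2 * n + 1), Nat.mod_lt _ (by omega)⟩,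
    ratioParity n ((Nat.log 2 x + n) / (2 * n + 1)))

theorem coloring_eq_iff {n x y : ℕ} :
    coloring n x = coloring n y ↔
      min x (2 ^ (n + 1)) = min y (2 ^ (n + 1)) ∧
      Nat.log 2 x % (2 * n + 1) = Nat.log 2 y % (2 * n + 1) ∧
      ratioParity n ((Nat.log 2 x + n) / (2 * n + 1)) =
        ratioParity n ((Nat.log 2 y + n) / (2 * n + 1)) := by
  simp only [coloring, Prod.mk.injEq, Fin.mk.injEq]

theorem not_coloring_eq_of_large {n x y z : ℕ} (hn : 1 ≤ n) (hyx : y ≤ x) (hx : 2 ^ (n + 1) ≤ x)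
    (hz : z ≠ 0) (hxz : coloring n x = coloring n z) (h : x ^ n + y ^ n = z ^ (n + 1)) : False := by
  obtain ⟨-, hmod, hpar⟩ := coloring_eq_iff.mp hxz
  have hM : n + 1 ≤ Nat.log 2 x := Nat.le_log_of_pow_le one_lt_two hx
  have hx₀ : x ≠ 0 := ((Nat.two_pow_pos _).trans_le hx).ne'
  obtain ⟨h₁, h₂⟩ := log_two_bounds_of_pow_add_pow_eq_pow_succ (by omega) hyx hx₀ hz h
  obtain ⟨t, ht, hxt, hzt⟩ := exists_levels_of_log_bounds hM h₁ h₂ hmod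
  rw [hxt, hzt, ratioParity_mul_succ hn ht] at hpar
  exact Bool.not_ne_self _ hpar

theorem xn_add_yn_eq_z_succ_not_PR (n : ℕ) (hn : 1 ≤ n) :
    ∃ (r : ℕ) (χ : ℕ → Fin r),
      ∀ x y z : ℕ, 0 < x → 0 < y → 0 < z →
        χ x = χ y → χ y = χ z → x ^ n + y ^ n = z ^ (n + 1) →
          x = 2 ∧ y = 2 ∧ z = 2 := by
  refine ⟨_, Fintype.equivFin _ ∘ coloring n, fun x y z hx _ hz hxy hyz h => ?_⟩
  simp only [Function.comp_apply, EmbeddingLike.apply_eq_iff_eq] at hxy hyz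
  obtain ⟨hxy₀, -⟩ := coloring_eq_iff.mp hxy
  obtain ⟨hyz₀, -⟩ := coloring_eq_iff.mp hyz
  by_cases hsmall : x < 2 ^ (n + 1)
  · obtain rfl : y = x := by omega
    obtain rfl : z = y := by omega
    have := eq_two_of_pow_add_pow_eq_pow_succ hx h
    exact ⟨this, this, this⟩
  rcases le_total y x with hyx | hxy_le
  · exact (not_coloring_eq_of_large hn hyx (by omega) hz.ne' (hxy.trans hyz) h).elim
  · exact (not_coloring_eq_of_large hn hxy_le (by omega) hz.ne' hyz (by rwa [add_comm])).elim
end
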